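/- The piecewise function B defined by 0 for s ≤ s_R, -(2D(s_R - s)^2(s_R - 3s_S + 2s))/(3(s_R - s_S)^2) for s in [s_R, s_S], and (2/3)D(s_S - s_R) for s ≥ s_S, is monotone nondecreasing on ℝ. -/
import Mathlib


theorem stmt_4 (sR sS D : ℝ) (hR : 0 ≤ sR) (hRS : sR < sS) (hD : 0 < D)
    (B : ℝ → ℝ)
    (hB : ∀ s, B s = if s ≤ sR then 0
      else if s ≤ sS then -(2 * D * (sR - s) ^ 2 * (sR - 3 * sS + 2 * s)) / (3 * (sR - sS) ^ 2)
      else 2 / 3 * D * (sS - sR)) :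
    Monotone B := by
  intro x y hxy
  rw [hB x, hB y]
  have hne : sR - sS ≠ 0 := by intro h; linarith
  have hden : (0:ℝ) < 3 * (sR - sS) ^ 2 := by positivity
  split_ifs with h1 h2 h3 h4 h5 h6 h7 h8
  · exact le_refl 0
  · apply div_nonneg _ hden.le
    nlinarith [mul_nonneg (mul_nonneg hD.le (sq_nonneg (sR - y))) (show (0:ℝ) ≤ 3*sS - sR - 2*y by linarith)]
  · nlinarith
  · linarith
  · rw [div_le_div_iff₀ hden hden]
    nlinarith [mul_nonneg (mul_nonneg hD.le (sub_nonneg.2 hxy)) (mul_nonneg (show (0:ℝ) ≤ sS - y by linarith) (show (0:ℝ) ≤ x - sR by linarith)),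
      mul_nonneg (mul_nonneg hD.le (sub_nonneg.2 hxy)) (mul_nonneg (show (0:ℝ) ≤ sS - x by linarith) (show (0:ℝ) ≤ y - sR by linarith)),
      mul_nonneg (mul_nonneg hD.le (sub_nonneg.2 hxy)) (mul_nonneg (show (0:ℝ) ≤ sS - y by linarith) (show (0:ℝ) ≤ y - sR by linarith)),
      mul_nonneg (mul_nonneg hD.le (sub_nonneg.2 hxy)) (mul_nonneg (show (0:ℝ) ≤ sS - x by linarith) (show (0:ℝ) ≤ x - sR by linarith)),
      mul_nonneg (mul_nonneg hD.le (sub_nonneg.2 hxy)) (sq_nonneg (y - x)),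
      mul_nonneg (mul_nonneg hD.le (sub_nonneg.2 hxy)) (sq_nonneg (sS - sR))]
  · rw [div_le_iff₀ hden]
    nlinarith [mul_nonneg (mul_nonneg hD.le (sq_nonneg (sS - x))) (show (0:ℝ) ≤ (sS - sR) + 2*(x - sR) by linarith)]
  · linarith
  · linarith
  · exact le_refl _
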